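/- Quantifier elimination for regular membership: let 𝒜 be an NFH over Σ with variable set X = {x₁,…,x_k}, k ≥ 2, quantifier prefix ℚ₁x₁·…·ℚ_kx_k and underlying NFA Â, and let L ⊆ Σ* be a nonempty regular language. Let B be an NFA over (Σ ∪ {#})^{X\{x_k}} whose language is { w_v | v : (X\{x_k}) → Σ* and ∃u ∈ L, Â accepts w_{v[x_k↦u]} } if ℚ_k = ∃, and { w_v | v : (X\{x_k}) → Σ* and ∀u ∈ L, Â accepts w_{v[x_k↦u]} } if ℚ_k = ∀. Let 𝒜′ be the NFH with variable set X \ {x_k}, quantifier prefix ℚ₁x₁·…·ℚ_{k-1}x_{k-1}, and underlying NFA B. Then L ∈ 𝔏(𝒜) if and only if L ∈ 𝔏(𝒜′) (viewing the language L as a hyperword). -/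
import Mathlib


/-- Quantifiers for NFH quantifier prefixes. -/
inductive Quant | ex | all

/-- The word assignment `w_v` over the extended alphabet `X → Option σ` (where `none` is the
padding symbol `#`) induced by an assignment `v : X → Σ*`: its length is the maximum of the
lengths of the assigned words, and its `i`-th letter sends `x` to the `i`-th letter of `v x`
(or to `#` if `v x` is too short). -/
def wordAssign {σ X : Type} [Fintype X] (v : X → List σ) : List (X → Option σ) :=
  (List.range (Finset.univ.sup fun x : X => (v x).length)).map (fun i x => (v x)[i]?)

/-- Satisfaction of a quantifier prefix over a language `L` of word assignments, relative to a
hyperword `S` and an assignment `v`. -/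
def HSat {σ X : Type} [Fintype X] [DecidableEq X] (L : Language (X → Option σ)) :
    List (Quant × X) → Set (List σ) → (X → List σ) → Prop
  | [], _, v => wordAssign v ∈ L
  | (Quant.ex, x) :: qs, S, v => ∃ w ∈ S, HSat L qs S (Function.update v x w)
  | (Quant.all, x) :: qs, S, v => ∀ w ∈ S, HSat L qs S (Function.update v x w)

/-- A hyperword `S` is accepted (the prefix binds all variables, so the initial assignment is
irrelevant; we use the all-empty assignment). -/
def HAccepts {σ X : Type} [Fintype X] [DecidableEq X] (L : Language (X → Option σ))
    (qs : List (Quant × X)) (S : Set (List σ)) : Prop :=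
  HSat L qs S (fun _ => [])

/-- The hyperlanguage: all nonempty accepted hyperwords. -/
def HLang {σ X : Type} [Fintype X] [DecidableEq X] (L : Language (X → Option σ))
    (qs : List (Quant × X)) : Set (Set (List σ)) :=
  {S | S.Nonempty ∧ HAccepts L qs S}

/-- The quantifier prefix binds each variable of `X` exactly once. -/
def Binds {X : Type} (qs : List (Quant × X)) : Prop :=
  (qs.map Prod.snd).Nodup ∧ ∀ x : X, x ∈ qs.map Prod.snd

private lemma aux_filterMap_range {σ : Type} (l : List σ) :
    ∀ N, l.length ≤ N → (List.range N).filterMap (fun i => l[i]?) = l := by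
  have key : ∀ N, (List.range N).filterMap (fun i => l[i]?) = l.take N := by
    intro N
    induction N with
    | zero => simp
    | succ n ih =>
      rw [List.range_succ, List.filterMap_append, ih, List.take_succ]
      cases h : l[n]? <;> simp [h]
  intro N hN
  rw [key, List.take_of_length_le hN]

private lemma wordAssign_apply {σ X : Type} [Fintype X] (v : X → List σ) (x : X) :
    (wordAssign v).filterMap (fun f => f x) = v x := by
  unfold wordAssign
  rw [List.filterMap_map]
  exact aux_filterMap_range (v x) _
    (Finset.le_sup (f := fun x : X => (v x).length) (Finset.mem_univ x))

private lemma wordAssign_inj {σ X : Type} [Fintype X] {v v' : X → List σ}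
    (h : wordAssign v = wordAssign v') : v = v' := by
  funext x
  rw [← wordAssign_apply v x, ← wordAssign_apply v' x, h]

private lemma elim_eq_update {σ X' : Type} [DecidableEq X'] (v : Option X' → List σ) (w : List σ) :
    (fun o : Option X' => o.elim w (v ∘ some)) = Function.update v none w := by
  funext o
  cases o with
  | none => simp
  | some x => simp [Function.update]

private lemma comp_update {σ X' : Type} [DecidableEq X'] (v : Option X' → List σ)
    (x : X') (w : List σ) :
    (Function.update v (some x) w) ∘ some = Function.update (v ∘ some) x w := by
  funext y
  simp [Function.update_apply, Function.comp]

/-- Quantifier elimination for regular membership. The variable set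
`X = {x₁,…,x_k}` is modeled as `Option X'`, where `none` plays the role of the last variable
`x_k` and `X'` models `{x₁,…,x_{k-1}}` (`k ≥ 2`, i.e. `qs'` is nonempty). If `B` is an NFA
over the extended alphabet for `X'` whose language is the ∃- (resp. ∀-) projection of the
language of `Â` along `x_k` relative to the nonempty regular language `L`, according to the
last quantifier `q`, then `L ∈ 𝔏(𝒜)` iff `L ∈ 𝔏(𝒜′)`. -/
theorem nfh_regular_membership_quantifier_elimination {σ X' Q QB : Type}
    [Fintype X'] [DecidableEq X'] [Fintype Q] [Fintype QB]
    (A : NFA (Option X' → Option σ) Q) (qs' : List (Quant × X')) (q : Quant)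
    (hk : qs' ≠ []) (hbind : Binds qs')
    (L : Language σ) (hLne : ∃ u, u ∈ L) (hLreg : L.IsRegular)
    (B : NFA (X' → Option σ) QB)
    (hB : ∀ w : List (X' → Option σ),
        w ∈ B.accepts ↔
          ∃ v : X' → List σ, w = wordAssign v ∧
            match q with
            | Quant.ex => ∃ u ∈ L, wordAssign (fun o : Option X' => o.elim u v) ∈ A.accepts
            | Quant.all => ∀ u ∈ L, wordAssign (fun o : Option X' => o.elim u v) ∈ A.accepts) :
    (L : Set (List σ)) ∈
        HLang A.accepts (qs'.map (fun p => (p.1, some p.2)) ++ [(q, (none : Option X'))]) ↔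
      (L : Set (List σ)) ∈ HLang B.accepts qs' := by
  have main : ∀ (qs : List (Quant × X')) (v : Option X' → List σ),
      HSat A.accepts (qs.map (fun p => (p.1, some p.2)) ++ [(q, (none : Option X'))])
          (L : Set (List σ)) v ↔
        HSat B.accepts qs (L : Set (List σ)) (v ∘ some) := by
    intro qs
    induction qs with
    | nil =>
      intro v
      cases q with
      | ex =>
        show (∃ w ∈ (L : Set (List σ)), wordAssign (Function.update v none w) ∈ A.accepts) ↔
          wordAssign (v ∘ some) ∈ B.accepts
        rw [hB]
        constructor
        · rintro ⟨w, hw, hA⟩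
          exact ⟨v ∘ some, rfl, w, hw, by rw [elim_eq_update]; exact hA⟩
        · rintro ⟨v', hv', w, hw, hA⟩
          have : v' = v ∘ some := wordAssign_inj hv'.symm
          subst this
          rw [elim_eq_update] at hA
          exact ⟨w, hw, hA⟩
      | all =>
        show (∀ w ∈ (L : Set (List σ)), wordAssign (Function.update v none w) ∈ A.accepts) ↔
          wordAssign (v ∘ some) ∈ B.accepts
        rw [hB]
        constructor
        · intro h
          exact ⟨v ∘ some, rfl, fun u hu => by rw [elim_eq_update]; exact h u hu⟩
        · rintro ⟨v', hv', h⟩ w hw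
          have : v' = v ∘ some := wordAssign_inj hv'.symm
          subst this
          have := h w hw
          rwa [elim_eq_update] at this
    | cons p rest ih =>
      intro v
      obtain ⟨qc, x⟩ := p
      cases qc with
      | ex =>
        show (∃ w ∈ (L : Set (List σ)), HSat A.accepts _ _ (Function.update v (some x) w)) ↔
          ∃ w ∈ (L : Set (List σ)), HSat B.accepts rest _ (Function.update (v ∘ some) x w)
        constructor
        · rintro ⟨w, hw, h⟩
          exact ⟨w, hw, by rw [← comp_update]; exact (ih _).mp h⟩
        · rintro ⟨w, hw, h⟩
          refine ⟨w, hw, (ih _).mpr ?_⟩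
          rwa [comp_update]
      | all =>
        show (∀ w ∈ (L : Set (List σ)), HSat A.accepts _ _ (Function.update v (some x) w)) ↔
          ∀ w ∈ (L : Set (List σ)), HSat B.accepts rest _ (Function.update (v ∘ some) x w)
        constructor
        · intro h w hw
          rw [← comp_update]
          exact (ih _).mp (h w hw)
        · intro h w hw
          refine (ih _).mpr ?_
          rw [comp_update]
          exact h w hw
  unfold HLang HAccepts
  exact and_congr_right fun _ => main qs' (fun _ => [])
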